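/- Let n ≥ 1, let A, B ∈ ℝ and let f, γ : ℝ → ℝ be smooth. On the open set U = {(λ,μ) ∈ ℝ^n × ℝ^n : the λ_r are pairwise distinct} define the Benenti Hamiltonians H_i(λ,μ) := Σ_{r=1}^{n} (−∂q_i/∂λ_r)(λ) · (A f(λ_r) μ_r² + B γ(λ_r)) / Δ_r(λ), i = 1,…,n. Then the H_i pairwise Poisson commute on U: for all i, j ∈ {1,…,n} and all (λ,μ) ∈ U, Σ_{k=1}^{n} ( ∂H_i/∂λ_k · ∂H_j/∂μ_k − ∂H_i/∂μ_k · ∂H_j/∂λ_k ) = 0. -/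

import Mathlib

open scoped BigOperators

/-- The Viète polynomials: `vieta n lam i` is
`q_{i+1}(λ) = (-1)^{i+1} ∑_{s_1<…<s_{i+1}} λ_{s_1}⋯λ_{s_{i+1}}` (0-based index `i`). -/
noncomputable def vieta (n : ℕ) (lam : Fin n → ℝ) (i : Fin n) : ℝ :=
  (-1 : ℝ) ^ ((i : ℕ) + 1) *
    ∑ s ∈ (Finset.univ : Finset (Fin n)).powersetCard ((i : ℕ) + 1), ∏ j ∈ s, lam j

/-- Partial derivative of `f : ℝ^n → ℝ` with respect to the `r`-th coordinate at `x`. -/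
noncomputable def pderiv' (n : ℕ) (f : (Fin n → ℝ) → ℝ) (r : Fin n) (x : Fin n → ℝ) : ℝ :=
  deriv (fun t => f (Function.update x r t)) (x r)

/-- `Δ_r(λ) = ∏_{j ≠ r} (λ_r − λ_j)`. -/
noncomputable def Delta (n : ℕ) (lam : Fin n → ℝ) (r : Fin n) : ℝ :=
  ∏ j ∈ Finset.univ.erase r, (lam r - lam j)

/-- The Benenti Hamiltonians
`H_i(λ,μ) = ∑_r (−∂q_i/∂λ_r)(λ) (A f(λ_r) μ_r² + B γ(λ_r)) / Δ_r(λ)`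
as functions on the phase space `ℝ^n × ℝ^n`. -/
noncomputable def HamB (n : ℕ) (A B : ℝ) (f γ : ℝ → ℝ) (i : Fin n)
    (p : (Fin n → ℝ) × (Fin n → ℝ)) : ℝ :=
  ∑ r : Fin n,
    -(pderiv' n (fun l => vieta n l i) r p.1) *
      (A * f (p.1 r) * p.2 r ^ 2 + B * γ (p.1 r)) / Delta n p.1 r

/-- Partial derivative of a phase-space function with respect to `λ_k`. -/
noncomputable def pdLam (n : ℕ) (F : (Fin n → ℝ) × (Fin n → ℝ) → ℝ) (k : Fin n)
    (p : (Fin n → ℝ) × (Fin n → ℝ)) : ℝ :=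
  deriv (fun t => F (Function.update p.1 k t, p.2)) (p.1 k)

/-- Partial derivative of a phase-space function with respect to `μ_k`. -/
noncomputable def pdMu (n : ℕ) (F : (Fin n → ℝ) × (Fin n → ℝ) → ℝ) (k : Fin n)
    (p : (Fin n → ℝ) × (Fin n → ℝ)) : ℝ :=
  deriv (fun t => F (p.1, Function.update p.2 k t)) (p.2 k)

noncomputable def esym (n : ℕ) (S : Finset (Fin n)) (m : ℕ) (l : Fin n → ℝ) : ℝ :=
  ∑ t ∈ S.powersetCard m, ∏ j ∈ t, l j

lemma esym_zero (n : ℕ) (S : Finset (Fin n)) (l : Fin n → ℝ) : esym n S 0 l = 1 := by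
  simp [esym]

lemma esym_of_card_lt (n : ℕ) (S : Finset (Fin n)) (m : ℕ) (l : Fin n → ℝ)
    (h : S.card < m) : esym n S m l = 0 := by
  simp [esym, Finset.powersetCard_eq_empty.2 h]

lemma esym_insert (n : ℕ) (a : Fin n) (S : Finset (Fin n)) (ha : a ∉ S) (m : ℕ)
    (l : Fin n → ℝ) :
    esym n (insert a S) (m + 1) l = esym n S (m + 1) l + l a * esym n S m l := by
  unfold esym
  rw [Finset.powersetCard_succ_insert ha, Finset.sum_union, Finset.sum_image]
  · rw [Finset.mul_sum]
    congr 1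
    refine Finset.sum_congr rfl fun t ht => ?_
    have hat : a ∉ t := fun hat => ha ((Finset.mem_powersetCard.1 ht).1 hat)
    rw [Finset.prod_insert hat]
  · intro t ht u hu h
    have hat : a ∉ t := fun hat => ha ((Finset.mem_powersetCard.1 ht).1 hat)
    have hau : a ∉ u := fun hau => ha ((Finset.mem_powersetCard.1 hu).1 hau)
    rw [← Finset.erase_insert hat, ← Finset.erase_insert hau, h]
  · rw [Finset.disjoint_right]
    rintro t ht ht'
    obtain ⟨u, hu, rfl⟩ := Finset.mem_image.1 ht
    exact ha ((Finset.mem_powersetCard.1 ht').1 (Finset.mem_insert_self a u))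

lemma prod_esym (n : ℕ) (S : Finset (Fin n)) (l : Fin n → ℝ) (x : ℝ) :
    ∏ j ∈ S, (x - l j)
      = ∑ m ∈ Finset.range (S.card + 1), (-1 : ℝ) ^ m * esym n S m l * x ^ (S.card - m) := by
  induction S using Finset.induction_on with
  | empty => simp [esym_zero]
  | @insert a S ha ih =>
    rw [Finset.prod_insert ha, ih, Finset.card_insert_of_notMem ha]
    rw [Finset.sum_range_succ' (fun m => (-1:ℝ)^m * esym n (insert a S) m l * x ^ (S.card + 1 - m))]
    have h0 : esym n (insert a S) 0 l = 1 := esym_zero _ _ _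
    have hins : ∀ m, esym n (insert a S) (m+1) l = esym n S (m+1) l + l a * esym n S m l :=
      fun m => esym_insert n a S ha m l
    have expand : ∀ m ∈ Finset.range (S.card + 1),
        (-1:ℝ)^(m+1) * esym n (insert a S) (m+1) l * x ^ (S.card + 1 - (m+1))
          = (-1:ℝ)^(m+1) * esym n S (m+1) l * x ^ (S.card - m)
            + (-(l a)) * ((-1:ℝ)^m * esym n S m l * x ^ (S.card - m)) := by
      intro m hm
      rw [hins m]
      have : S.card + 1 - (m+1) = S.card - m := by omega
      rw [this]
      ring
    rw [Finset.sum_congr rfl expand, Finset.sum_add_distrib, h0]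
    have e1 : (x - l a) * ∑ m ∈ Finset.range (S.card + 1), (-1:ℝ)^m * esym n S m l * x ^ (S.card - m)
        = (∑ m ∈ Finset.range (S.card + 1), x * ((-1:ℝ)^m * esym n S m l * x ^ (S.card - m)))
          + ∑ m ∈ Finset.range (S.card + 1), (-(l a)) * ((-1:ℝ)^m * esym n S m l * x ^ (S.card - m)) := by
      rw [sub_mul, Finset.mul_sum, Finset.mul_sum, ← Finset.sum_sub_distrib,
        ← Finset.sum_add_distrib]
      exact Finset.sum_congr rfl fun m _ => by ring
    have e2 : ∀ m ∈ Finset.range (S.card + 1),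
        x * ((-1:ℝ)^m * esym n S m l * x ^ (S.card - m))
          = (-1:ℝ)^m * esym n S m l * x ^ (S.card + 1 - m) := by
      intro m hm
      have hm' : m ≤ S.card := Nat.lt_succ_iff.1 (Finset.mem_range.1 hm)
      have : S.card + 1 - m = (S.card - m) + 1 := by omega
      rw [this, pow_succ]
      ring
    have e3 : (∑ m ∈ Finset.range (S.card + 1), (-1:ℝ)^m * esym n S m l * x ^ (S.card + 1 - m))
        = (∑ m ∈ Finset.range S.card, (-1:ℝ)^(m+1) * esym n S (m+1) l * x ^ (S.card - m))
          + x ^ (S.card + 1) := by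
      rw [Finset.sum_range_succ' (fun m => (-1:ℝ)^m * esym n S m l * x ^ (S.card + 1 - m))]
      simp only [esym_zero, pow_zero, one_mul, mul_one, Nat.sub_zero]
      congr 1
      refine Finset.sum_congr rfl fun m hm => ?_
      have : S.card + 1 - (m+1) = S.card - m := by omega
      rw [this]
    have e4 : (∑ m ∈ Finset.range (S.card + 1), (-1:ℝ)^(m+1) * esym n S (m+1) l * x ^ (S.card - m))
        = ∑ m ∈ Finset.range S.card, (-1:ℝ)^(m+1) * esym n S (m+1) l * x ^ (S.card - m) := by
      rw [Finset.sum_range_succ]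
      rw [esym_of_card_lt n S (S.card + 1) l (by omega)]
      ring
    rw [e1, Finset.sum_congr rfl e2, e3, e4]
    simp only [Nat.sub_zero, one_mul]
    ring

noncomputable def cfun (n : ℕ) (i r : Fin n) (l : Fin n → ℝ) : ℝ :=
  (-1 : ℝ) ^ (i : ℕ) * esym n (Finset.univ.erase r) (i : ℕ) l / Delta n l r

lemma card_erase_univ (n : ℕ) (r : Fin n) :
    ((Finset.univ : Finset (Fin n)).erase r).card = n - 1 := by
  rw [Finset.card_erase_of_mem (Finset.mem_univ r), Finset.card_univ, Fintype.card_fin]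

lemma Delta_ne_zero (n : ℕ) (l : Fin n → ℝ) (hd : ∀ r s : Fin n, r ≠ s → l r ≠ l s)
    (r : Fin n) : Delta n l r ≠ 0 := by
  refine Finset.prod_ne_zero_iff.2 fun j hj => ?_
  exact sub_ne_zero.2 (hd r j (Finset.ne_of_mem_erase hj).symm)

lemma stackel_num (n : ℕ) (l : Fin n → ℝ) (r : Fin n) (x : ℝ) :
    ∑ i : Fin n, (-1 : ℝ) ^ (i : ℕ) * esym n (Finset.univ.erase r) (i : ℕ) l * x ^ (n - 1 - (i : ℕ))
      = ∏ j ∈ Finset.univ.erase r, (x - l j) := by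
  rw [prod_esym n (Finset.univ.erase r) l x, card_erase_univ]
  have hn : 0 < n := r.pos
  have h1 : n - 1 + 1 = n := by omega
  rw [h1, ← Fin.sum_univ_eq_sum_range (fun m => (-1 : ℝ) ^ m * esym n (Finset.univ.erase r) m l * x ^ (n - 1 - m)) n]

lemma stackel1 (n : ℕ) (l : Fin n → ℝ) (hd : ∀ r s : Fin n, r ≠ s → l r ≠ l s) (r s : Fin n) :
    ∑ i : Fin n, cfun n i r l * l s ^ (n - 1 - (i : ℕ)) = if r = s then 1 else 0 := by
  have hD := Delta_ne_zero n l hd r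
  have : ∑ i : Fin n, cfun n i r l * l s ^ (n - 1 - (i : ℕ))
      = (∑ i : Fin n, (-1 : ℝ) ^ (i : ℕ) * esym n (Finset.univ.erase r) (i : ℕ) l
          * l s ^ (n - 1 - (i : ℕ))) / Delta n l r := by
    rw [Finset.sum_div]
    exact Finset.sum_congr rfl fun i _ => by rw [cfun, div_mul_eq_mul_div]
  rw [this, stackel_num]
  by_cases h : r = s
  · subst h
    simp only [if_pos rfl]
    exact div_self hD
  · rw [if_neg h]
    have hs : s ∈ Finset.univ.erase r := Finset.mem_erase.2 ⟨Ne.symm h, Finset.mem_univ s⟩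
    rw [Finset.prod_eq_zero hs (by ring), zero_div]

lemma stackel2 (n : ℕ) (l : Fin n → ℝ) (hd : ∀ r s : Fin n, r ≠ s → l r ≠ l s) (i j : Fin n) :
    ∑ r : Fin n, cfun n i r l * l r ^ (n - 1 - (j : ℕ)) = if i = j then 1 else 0 := by
  classical
  set M : Matrix (Fin n) (Fin n) ℝ := fun i r => cfun n i r l with hM
  set V : Matrix (Fin n) (Fin n) ℝ := fun r i => l r ^ (n - 1 - (i : ℕ)) with hV
  have hVM : V * M = 1 := by
    ext s r
    rw [Matrix.mul_apply, Matrix.one_apply]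
    have := stackel1 n l hd r s
    rw [show ((if s = r then (1:ℝ) else 0) = if r = s then 1 else 0) by
      by_cases h : r = s <;> simp [h, Ne.symm, eq_comm]]
    rw [← this]
    exact Finset.sum_congr rfl fun k _ => by rw [hM, hV]; ring
  have hMV : M * V = 1 := mul_eq_one_comm.2 hVM
  have := congrArg (fun A => A i j) hMV
  simp only [Matrix.mul_apply, Matrix.one_apply] at this
  simpa [hM, hV] using this

lemma hasDerivAt_update_coord (n : ℕ) (l : Fin n → ℝ) (k j : Fin n) (t0 : ℝ) :
    HasDerivAt (fun t : ℝ => Function.update l k t j) (if j = k then 1 else 0) t0 := by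
  simp only [Function.update_apply]
  by_cases h : j = k
  · simp only [h, if_pos rfl]
    exact hasDerivAt_id t0
  · simp only [if_neg h]
    exact hasDerivAt_const t0 (l j)

lemma diffAt_update_coord (n : ℕ) (l : Fin n → ℝ) (k j : Fin n) (t0 : ℝ) :
    DifferentiableAt ℝ (fun t : ℝ => Function.update l k t j) t0 :=
  (hasDerivAt_update_coord n l k j t0).differentiableAt

lemma diffAt_esym_update (n : ℕ) (S : Finset (Fin n)) (m : ℕ) (l : Fin n → ℝ) (k : Fin n)
    (t0 : ℝ) : DifferentiableAt ℝ (fun t => esym n S m (Function.update l k t)) t0 := by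
  unfold esym
  refine DifferentiableAt.fun_sum fun s _ => ?_
  exact DifferentiableAt.fun_finsetProd fun j _ => diffAt_update_coord n l k j t0

lemma diffAt_Delta_update (n : ℕ) (l : Fin n → ℝ) (k r : Fin n) (t0 : ℝ) :
    DifferentiableAt ℝ (fun t => Delta n (Function.update l k t) r) t0 := by
  unfold Delta
  refine DifferentiableAt.fun_finsetProd fun j _ => ?_
  exact (diffAt_update_coord n l k r t0).sub (diffAt_update_coord n l k j t0)

lemma diffAt_cfun_update (n : ℕ) (l : Fin n → ℝ) (hd : ∀ r s : Fin n, r ≠ s → l r ≠ l s)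
    (i r k : Fin n) :
    DifferentiableAt ℝ (fun t => cfun n i r (Function.update l k t)) (l k) := by
  unfold cfun
  refine DifferentiableAt.div ?_ (diffAt_Delta_update n l k r (l k)) ?_
  · exact (diffAt_esym_update n (Finset.univ.erase r) (i : ℕ) l k (l k)).const_mul _
  · rw [Function.update_eq_self]
    exact Delta_ne_zero n l hd r

lemma eventually_update_distinct (n : ℕ) (l : Fin n → ℝ)
    (hd : ∀ r s : Fin n, r ≠ s → l r ≠ l s) (k : Fin n) :
    ∀ᶠ t in nhds (l k), ∀ r s : Fin n, r ≠ s →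
      Function.update l k t r ≠ Function.update l k t s := by
  have h1 : ∀ᶠ t in nhds (l k), ∀ j : Fin n, j ≠ k → t ≠ l j := by
    rw [Filter.eventually_all]
    intro j
    by_cases hj : j ≠ k
    · filter_upwards [eventually_ne_nhds (hd k j (Ne.symm hj))] with t ht
      exact fun _ => ht
    · filter_upwards with t ht; exact absurd ht hj
  filter_upwards [h1] with t ht r s hrs
  rcases eq_or_ne r k with rfl | hr
  · rw [Function.update_self, Function.update_of_ne (Ne.symm hrs)]
    exact ht s (Ne.symm hrs)
  · rw [Function.update_of_ne hr]
    rcases eq_or_ne s k with rfl | hs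
    · rw [Function.update_self]
      exact fun h => ht r hr h.symm
    · rw [Function.update_of_ne hs]
      exact hd r s hrs

lemma deriv_cfun_key (n : ℕ) (l : Fin n → ℝ) (hd : ∀ r s : Fin n, r ≠ s → l r ≠ l s)
    (k : Fin n) :
    ∃ w : Fin n → ℝ, ∀ i s : Fin n,
      deriv (fun t => cfun n i s (Function.update l k t)) (l k) = cfun n i k l * w s := by
  classical
  set D : Fin n → Fin n → ℝ :=
    fun i s => deriv (fun t => cfun n i s (Function.update l k t)) (l k) with hDdef
  set W : Fin n → ℝ := fun s => ∑ i : Fin n,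
    cfun n i s l * (((n - 1 - (i : ℕ) : ℕ) : ℝ) * l k ^ (n - 1 - (i : ℕ) - 1)) with hWdef
  refine ⟨fun s => -(W s), fun i s => ?_⟩
  have step1 : ∀ r : Fin n, ∑ i' : Fin n, D i' s * l r ^ (n - 1 - (i' : ℕ))
      = if r = k then -(W s) else 0 := by
    intro r
    have hval : HasDerivAt (fun t => ∑ i' : Fin n,
        cfun n i' s (Function.update l k t) * (Function.update l k t r) ^ (n - 1 - (i' : ℕ)))
        (∑ i' : Fin n, (D i' s * l r ^ (n - 1 - (i' : ℕ))
          + cfun n i' s l * (if r = k then ((n - 1 - (i' : ℕ) : ℕ) : ℝ)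
              * l k ^ (n - 1 - (i' : ℕ) - 1) else 0)))
        (l k) := by
      refine HasDerivAt.fun_sum fun i' _ => ?_
      have h1 : HasDerivAt (fun t => cfun n i' s (Function.update l k t)) (D i' s) (l k) :=
        (diffAt_cfun_update n l hd i' s k).hasDerivAt
      have h2 : HasDerivAt (fun t => (Function.update l k t r) ^ (n - 1 - (i' : ℕ)))
          (if r = k then ((n - 1 - (i' : ℕ) : ℕ) : ℝ) * l k ^ (n - 1 - (i' : ℕ) - 1) else 0)
          (l k) := by
        rcases eq_or_ne r k with rfl | hr
        · simp only [Function.update_self, if_pos rfl]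
          exact hasDerivAt_pow _ _
        · simp only [Function.update_of_ne hr, if_neg hr]
          exact hasDerivAt_const _ _
      have h3 := h1.mul h2
      rw [Function.update_eq_self] at h3
      exact h3
    have heq : (fun t => ∑ i' : Fin n,
        cfun n i' s (Function.update l k t) * (Function.update l k t r) ^ (n - 1 - (i' : ℕ)))
        =ᶠ[nhds (l k)] fun _ => (if s = r then (1 : ℝ) else 0) := by
      filter_upwards [eventually_update_distinct n l hd k] with t ht
      exact stackel1 n (Function.update l k t) ht s r
    have hval0 : ∑ i' : Fin n, (D i' s * l r ^ (n - 1 - (i' : ℕ))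
          + cfun n i' s l * (if r = k then ((n - 1 - (i' : ℕ) : ℕ) : ℝ)
              * l k ^ (n - 1 - (i' : ℕ) - 1) else 0)) = 0 := by
      rw [← hval.deriv, heq.deriv_eq]
      exact deriv_const _ _
    rw [Finset.sum_add_distrib] at hval0
    rcases eq_or_ne r k with rfl | hr
    · simp only [eq_self_iff_true, if_true] at hval0 ⊢
      have hWs : W s = ∑ i' : Fin n, cfun n i' s l
          * (((n - 1 - (i' : ℕ) : ℕ) : ℝ) * l r ^ (n - 1 - (i' : ℕ) - 1)) := rfl
      rw [hWs]
      linarith [hval0]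
    · simp only [if_neg hr] at hval0 ⊢
      simpa using hval0
  have step2 : D i s = ∑ r : Fin n, cfun n i r l
      * (∑ i' : Fin n, D i' s * l r ^ (n - 1 - (i' : ℕ))) := by
    have : ∑ r : Fin n, cfun n i r l * (∑ i' : Fin n, D i' s * l r ^ (n - 1 - (i' : ℕ)))
        = ∑ i' : Fin n, D i' s * (∑ r : Fin n, cfun n i r l * l r ^ (n - 1 - (i' : ℕ))) := by
      calc ∑ r : Fin n, cfun n i r l * (∑ i' : Fin n, D i' s * l r ^ (n - 1 - (i' : ℕ)))
          = ∑ r : Fin n, ∑ i' : Fin n, cfun n i r l * (D i' s * l r ^ (n - 1 - (i' : ℕ))) := by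
            exact Finset.sum_congr rfl fun r _ => Finset.mul_sum _ _ _
        _ = ∑ i' : Fin n, ∑ r : Fin n, cfun n i r l * (D i' s * l r ^ (n - 1 - (i' : ℕ))) :=
            Finset.sum_comm
        _ = ∑ i' : Fin n, D i' s * (∑ r : Fin n, cfun n i r l * l r ^ (n - 1 - (i' : ℕ))) := by
            refine Finset.sum_congr rfl fun i' _ => ?_
            rw [Finset.mul_sum]
            exact Finset.sum_congr rfl fun r _ => by ring
    rw [this]
    simp_rw [stackel2 n l hd, mul_ite, mul_one, mul_zero]
    rw [Finset.sum_ite_eq Finset.univ i (fun i' => D i' s)]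
    simp
  show D i s = cfun n i k l * -(W s)
  rw [step2]
  simp_rw [step1]
  have : ∀ r : Fin n, cfun n i r l * (if r = k then -(W s) else 0)
      = if r = k then cfun n i r l * -(W s) else 0 := fun r => by
    by_cases h : r = k <;> simp [h]
  simp_rw [this]
  rw [Finset.sum_ite_eq' Finset.univ k (fun r => cfun n i r l * -(W s))]
  simp

lemma pderiv'_vieta (n : ℕ) (i r : Fin n) (x : Fin n → ℝ) :
    pderiv' n (fun l => vieta n l i) r x
      = (-1 : ℝ) ^ ((i : ℕ) + 1) * esym n (Finset.univ.erase r) (i : ℕ) x := by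
  classical
  have hprod : ∀ s : Finset (Fin n),
      HasDerivAt (fun t => ∏ j ∈ s, Function.update x r t j)
        (if r ∈ s then ∏ j ∈ s.erase r, x j else 0) (x r) := by
    intro s
    have h := HasDerivAt.fun_finsetProd (u := s) (f := fun j t => Function.update x r t j)
      (f' := fun j => if j = r then 1 else 0)
      (fun j _ => hasDerivAt_update_coord n x r j (x r))
    have hv : (∑ j ∈ s, (∏ m ∈ s.erase j, Function.update x r (x r) m)
          • (if j = r then (1 : ℝ) else 0))
        = if r ∈ s then ∏ j ∈ s.erase r, x j else 0 := by
      rw [Function.update_eq_self]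
      have : ∀ j ∈ s, (∏ m ∈ s.erase j, x m) • (if j = r then (1 : ℝ) else 0)
          = if j = r then ∏ m ∈ s.erase j, x m else 0 := by
        intro j _
        by_cases hj : j = r <;> simp [hj]
      rw [Finset.sum_congr rfl this, Finset.sum_ite_eq' s r (fun j => ∏ m ∈ s.erase j, x m)]
    rw [← hv]
    exact h
  show deriv (fun t => vieta n (Function.update x r t) i) (x r) = _
  have hfun : (fun t => vieta n (Function.update x r t) i)
      = fun t => (-1 : ℝ) ^ ((i : ℕ) + 1) *
          ∑ s ∈ (Finset.univ : Finset (Fin n)).powersetCard ((i : ℕ) + 1),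
            ∏ j ∈ s, Function.update x r t j := rfl
  rw [hfun]
  have hsum : HasDerivAt (fun t => (-1 : ℝ) ^ ((i : ℕ) + 1) *
        ∑ s ∈ (Finset.univ : Finset (Fin n)).powersetCard ((i : ℕ) + 1),
          ∏ j ∈ s, Function.update x r t j)
      ((-1 : ℝ) ^ ((i : ℕ) + 1) *
        ∑ s ∈ (Finset.univ : Finset (Fin n)).powersetCard ((i : ℕ) + 1),
          (if r ∈ s then ∏ j ∈ s.erase r, x j else 0)) (x r) :=
    (HasDerivAt.fun_sum fun s _ => hprod s).const_mul _
  rw [hsum.deriv]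
  congr 1
  rw [← Finset.sum_filter]
  unfold esym
  refine Finset.sum_nbij' (fun s => s.erase r) (fun t => insert r t) ?_ ?_ ?_ ?_ ?_
  · intro s hs
    obtain ⟨hs1, hs2⟩ := Finset.mem_filter.1 hs
    obtain ⟨_, hcard⟩ := Finset.mem_powersetCard.1 hs1
    refine Finset.mem_powersetCard.2 ⟨?_, ?_⟩
    · intro a ha
      exact Finset.mem_erase.2 ⟨(Finset.mem_erase.1 ha).1, Finset.mem_univ a⟩
    · rw [Finset.card_erase_of_mem hs2, hcard]
      omega
  · intro t ht
    obtain ⟨hsub, hcard⟩ := Finset.mem_powersetCard.1 ht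
    have hrt : r ∉ t := fun h => (Finset.mem_erase.1 (hsub h)).1 rfl
    refine Finset.mem_filter.2 ⟨Finset.mem_powersetCard.2 ⟨Finset.subset_univ _, ?_⟩,
      Finset.mem_insert_self r t⟩
    rw [Finset.card_insert_of_notMem hrt, hcard]
  · intro s hs
    exact Finset.insert_erase (Finset.mem_filter.1 hs).2
  · intro t ht
    have hrt : r ∉ t := fun h =>
      (Finset.mem_erase.1 ((Finset.mem_powersetCard.1 ht).1 h)).1 rfl
    exact Finset.erase_insert hrt
  · intro s _
    rfl

lemma HamB_eq (n : ℕ) (A B : ℝ) (f γ : ℝ → ℝ) (i : Fin n)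
    (p : (Fin n → ℝ) × (Fin n → ℝ)) :
    HamB n A B f γ i p
      = ∑ r : Fin n, cfun n i r p.1 * (A * f (p.1 r) * p.2 r ^ 2 + B * γ (p.1 r)) := by
  unfold HamB
  refine Finset.sum_congr rfl fun r _ => ?_
  rw [pderiv'_vieta]
  unfold cfun
  rw [pow_succ]
  ring

lemma pdMu_HamB (n : ℕ) (A B : ℝ) (f γ : ℝ → ℝ) (i k : Fin n) (lam mu : Fin n → ℝ) :
    pdMu n (HamB n A B f γ i) k (lam, mu)
      = cfun n i k lam * (A * f (lam k) * (2 * mu k)) := by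
  show deriv (fun t => HamB n A B f γ i (lam, Function.update mu k t)) (mu k) = _
  have hfun : (fun t => HamB n A B f γ i (lam, Function.update mu k t))
      = fun t => ∑ r : Fin n, cfun n i r lam
          * (A * f (lam r) * (Function.update mu k t r) ^ 2 + B * γ (lam r)) := by
    funext t
    exact HamB_eq n A B f γ i (lam, Function.update mu k t)
  rw [hfun]
  have hval : HasDerivAt (fun t => ∑ r : Fin n, cfun n i r lam
        * (A * f (lam r) * (Function.update mu k t r) ^ 2 + B * γ (lam r)))
      (∑ r : Fin n, if r = k then cfun n i k lam * (A * f (lam k) * (2 * mu k)) else 0)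
      (mu k) := by
    refine HasDerivAt.fun_sum fun r _ => ?_
    rcases eq_or_ne r k with rfl | hr
    · simp only [Function.update_self, if_pos rfl, if_true]
      have hp : HasDerivAt (fun t : ℝ => t ^ 2) (2 * mu r) (mu r) := by
        simpa using hasDerivAt_pow 2 (mu r)
      have h2 := ((hp.const_mul (A * f (lam r))).add_const (B * γ (lam r))).const_mul
        (cfun n i r lam)
      exact h2
    · simp only [Function.update_of_ne hr, if_neg hr]
      exact hasDerivAt_const _ _
  rw [hval.deriv, Finset.sum_ite_eq' Finset.univ k _]
  simp

lemma pdLam_HamB (n : ℕ) (A B : ℝ) (f γ : ℝ → ℝ) (hf : Differentiable ℝ f)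
    (hγ : Differentiable ℝ γ) (i k : Fin n) (lam mu : Fin n → ℝ)
    (hd : ∀ r s : Fin n, r ≠ s → lam r ≠ lam s) :
    pdLam n (HamB n A B f γ i) k (lam, mu)
      = (∑ r : Fin n, deriv (fun t => cfun n i r (Function.update lam k t)) (lam k)
            * (A * f (lam r) * mu r ^ 2 + B * γ (lam r)))
        + cfun n i k lam * (A * deriv f (lam k) * mu k ^ 2 + B * deriv γ (lam k)) := by
  show deriv (fun t => HamB n A B f γ i (Function.update lam k t, mu)) (lam k) = _
  have hfun : (fun t => HamB n A B f γ i (Function.update lam k t, mu))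
      = fun t => ∑ r : Fin n, cfun n i r (Function.update lam k t)
          * (A * f (Function.update lam k t r) * mu r ^ 2
              + B * γ (Function.update lam k t r)) := by
    funext t
    exact HamB_eq n A B f γ i (Function.update lam k t, mu)
  rw [hfun]
  have hval : HasDerivAt (fun t => ∑ r : Fin n, cfun n i r (Function.update lam k t)
        * (A * f (Function.update lam k t r) * mu r ^ 2
            + B * γ (Function.update lam k t r)))
      (∑ r : Fin n, (deriv (fun t => cfun n i r (Function.update lam k t)) (lam k)
            * (A * f (lam r) * mu r ^ 2 + B * γ (lam r))
          + if r = k then cfun n i k lam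
              * (A * deriv f (lam k) * mu k ^ 2 + B * deriv γ (lam k)) else 0))
      (lam k) := by
    refine HasDerivAt.fun_sum fun r _ => ?_
    have h1 : HasDerivAt (fun t => cfun n i r (Function.update lam k t))
        (deriv (fun t => cfun n i r (Function.update lam k t)) (lam k)) (lam k) :=
      (diffAt_cfun_update n lam hd i r k).hasDerivAt
    rcases eq_or_ne r k with rfl | hr
    · simp only [Function.update_self, if_pos rfl, if_true]
      have h2 : HasDerivAt (fun t => A * f t * mu r ^ 2 + B * γ t)
          (A * deriv f (lam r) * mu r ^ 2 + B * deriv γ (lam r)) (lam r) :=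
        (((hf (lam r)).hasDerivAt.const_mul A).mul_const (mu r ^ 2)).add
          (((hγ (lam r)).hasDerivAt.const_mul B))
      have h3 := h1.mul h2
      rw [Function.update_eq_self] at h3
      exact h3
    · simp only [Function.update_of_ne hr, if_neg hr, add_zero]
      exact h1.mul_const (A * f (lam r) * mu r ^ 2 + B * γ (lam r))
  rw [hval.deriv, Finset.sum_add_distrib, Finset.sum_ite_eq' Finset.univ k _]
  simp

/-- The Benenti Hamiltonians pairwise Poisson commute on the open set where the
`λ_r` are pairwise distinct. -/
theorem benenti_hamiltonians_poisson_commute (n : ℕ) (hn : 1 ≤ n) (A B : ℝ)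
    (f γ : ℝ → ℝ) (hf : ContDiff ℝ (⊤ : ℕ∞) f) (hγ : ContDiff ℝ (⊤ : ℕ∞) γ)
    (lam mu : Fin n → ℝ) (hdist : ∀ r s : Fin n, r ≠ s → lam r ≠ lam s)
    (i j : Fin n) :
    ∑ k : Fin n,
      (pdLam n (HamB n A B f γ i) k (lam, mu) * pdMu n (HamB n A B f γ j) k (lam, mu)
        - pdMu n (HamB n A B f γ i) k (lam, mu) * pdLam n (HamB n A B f γ j) k (lam, mu))
      = 0 := by
  classical
  have hf' : Differentiable ℝ f := hf.differentiable (by simp)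
  have hγ' : Differentiable ℝ γ := hγ.differentiable (by simp)
  refine Finset.sum_eq_zero fun k _ => ?_
  obtain ⟨w, hw⟩ := deriv_cfun_key n lam hdist k
  rw [pdLam_HamB n A B f γ hf' hγ' i k lam mu hdist,
    pdLam_HamB n A B f γ hf' hγ' j k lam mu hdist,
    pdMu_HamB n A B f γ i k lam mu, pdMu_HamB n A B f γ j k lam mu]
  have hsum : ∀ i0 : Fin n,
      (∑ r : Fin n, deriv (fun t => cfun n i0 r (Function.update lam k t)) (lam k)
          * (A * f (lam r) * mu r ^ 2 + B * γ (lam r)))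
        = cfun n i0 k lam
            * ∑ r : Fin n, w r * (A * f (lam r) * mu r ^ 2 + B * γ (lam r)) := by
    intro i0
    rw [Finset.mul_sum]
    refine Finset.sum_congr rfl fun r _ => ?_
    rw [hw i0 r]
    ring
  rw [hsum i, hsum j]
  ring
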